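/- Let A ∈ ℬ ≤ Hom(V, V') and suppose U ≤ V is a corank(A)-singularity witness of ℬ, i.e., dim(U) − dim(ℬ(U)) ≥ dim ker(A). Then A(U) = ℬ(U), ker(A) ⊆ U, and U = A⁻¹(A(U)). -/

import Mathlib

/-!
`A(U) ⊆ ℬ(U)` always holds, and rank–nullity for `A` restricted to `U` gives
`dim A(U) + dim (ker A ∩ U) = dim U ≥ dim ℬ(U) + dim ker A`. Both summands on the left are
bounded by the corresponding ones on the right, so both inequalities are equalities:
`A(U) = ℬ(U)` and `ker A ⊆ U`. The last claim is then `A⁻¹(A(U)) = U + ker A = U`.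
-/

open Submodule Module

variable {F V V' : Type*} [Field F] [AddCommGroup V] [Module F V]
  [AddCommGroup V'] [Module F V']

/-- The image of a subspace `U` under a matrix space `A`: the span of all `a u`. -/
def msImage (A : Submodule F (V →ₗ[F] V')) (U : Submodule F V) : Submodule F V' :=
  Submodule.span F {x | ∃ a ∈ A, ∃ u ∈ U, a u = x}

theorem map_le_msImage {ℬ : Submodule F (V →ₗ[F] V')} {A : V →ₗ[F] V'} (hA : A ∈ ℬ)
    (U : Submodule F V) : U.map A ≤ msImage ℬ U := by
  rintro _ ⟨u, hu, rfl⟩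
  exact subset_span ⟨A, hA, u, hu, rfl⟩

theorem LinearMap.finrank_map_add_finrank_ker_inf (A : V →ₗ[F] V') (W : Submodule F V)
    [FiniteDimensional F W] :
    finrank F (W.map A) + finrank F (LinearMap.ker A ⊓ W : Submodule F V) = finrank F W := by
  have h := LinearMap.finrank_range_add_finrank_ker (A.domRestrict W)
  rwa [LinearMap.range_domRestrict, LinearMap.ker_domRestrict,
    ← finrank_map_subtype_eq, map_comap_subtype, inf_comm] at h

theorem LinearMap.map_eq_and_ker_le_of_finrank_le [FiniteDimensional F V] {A : V →ₗ[F] V'}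
    {U : Submodule F V} {M : Submodule F V'} [FiniteDimensional F M] (hle : U.map A ≤ M)
    (hdim : finrank F M + finrank F (LinearMap.ker A) ≤ finrank F U) :
    U.map A = M ∧ LinearMap.ker A ≤ U := by
  have hrank := A.finrank_map_add_finrank_ker_inf U
  have hmap : finrank F (U.map A) ≤ finrank F M := finrank_mono hle
  have hker : finrank F (LinearMap.ker A ⊓ U : Submodule F V) ≤ finrank F (LinearMap.ker A) :=
    finrank_mono inf_le_left
  refine ⟨eq_of_le_of_finrank_le hle (by omega), inf_eq_left.mp ?_⟩
  exact eq_of_le_of_finrank_le inf_le_left (by omega)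

theorem stmt10 [FiniteDimensional F V] [FiniteDimensional F V']
    (ℬ : Submodule F (V →ₗ[F] V')) (A : V →ₗ[F] V') (hA : A ∈ ℬ)
    (U : Submodule F V)
    (hwit : finrank F (msImage ℬ U) + finrank F (LinearMap.ker A) ≤ finrank F U) :
    Submodule.map A U = msImage ℬ U ∧
    LinearMap.ker A ≤ U ∧
    U = (Submodule.map A U).comap A := by
  obtain ⟨himage, hker⟩ := LinearMap.map_eq_and_ker_le_of_finrank_le (map_le_msImage hA U) hwit
  exact ⟨himage, hker, by rw [comap_map_eq, sup_eq_left.mpr hker]⟩
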